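/- Let B ⊆ ℕ^m be a positive affine semigroup such that C(B) is generated by linearly independent elements e_1,…,e_d ∈ B, and let A be the submonoid of B generated by e_1,…,e_d. For x ∈ C(B) write x = Σ_{i=1}^d λ_i(x) e_i with λ_i(x) ∈ ℚ≥0. Then B is normal, i.e., B = G(B) ∩ C(B), if and only if every x ∈ B_A satisfies λ_i(x) < 1 for all i = 1,…,d. -/

import Mathlib

open scoped BigOperators

/-- The coordinatewise cast `ℕ^m → ℤ^m`. -/
def ntz {m : ℕ} (x : Fin m → ℕ) : Fin m → ℤ := fun i => (x i : ℤ)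

/-- The coordinatewise cast `ℕ^m → ℚ^m`. -/
def ntq {m : ℕ} (x : Fin m → ℕ) : Fin m → ℚ := fun i => (x i : ℚ)

/-- `G(S)`: the subgroup of `ℤ^m` generated by an affine semigroup `S ⊆ ℕ^m`. -/
def grp {m : ℕ} (S : AddSubmonoid (Fin m → ℕ)) : AddSubgroup (Fin m → ℤ) :=
  AddSubgroup.closure (ntz '' (S : Set (Fin m → ℕ)))

/-- `C(S)`: the cone in `ℚ^m` generated by `S`, i.e. all nonnegative rational
linear combinations of elements of `S`. -/
def cone {m : ℕ} (S : AddSubmonoid (Fin m → ℕ)) : Set (Fin m → ℚ) :=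
  {x | ∃ (n : ℕ) (c : Fin n → ℚ) (v : Fin n → Fin m → ℕ),
    (∀ i, 0 ≤ c i) ∧ (∀ i, v i ∈ S) ∧ x = ∑ i, c i • ntq (v i)}

/-- `B_A := {x ∈ B : x ∉ B + (A \ {0})}`. -/
def BA {m : ℕ} (A B : AddSubmonoid (Fin m → ℕ)) : Set (Fin m → ℕ) :=
  {x | x ∈ B ∧ ¬ ∃ b ∈ B, ∃ a ∈ A, a ≠ 0 ∧ x = b + a}

/-!
If `B` is normal and `x ∈ B_A` had `λᵢ(x) ≥ 1`, then `x - eᵢ` would lie in `G(B) ∩ C(B)`, hence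
in `B`, and `x = (x - eᵢ) + eᵢ` would not be in `B_A`.

Conversely, let `x ∈ G(B) ∩ C(B)`, so `x + q ∈ B` for some `q ∈ B`. Clearing the denominators of
the coordinates of `q` gives `N ≥ 1` with `N • q ∈ ℕe₁ + ⋯ + ℕe_d`, so that
`b = x + N • q = (x + q) + (N - 1) • q ∈ B`. Write `b = u + a` with `u ∈ B_A` and `a ∈ A`. Comparing
coordinates, `λ(x) + λ(N • q) = λ(u) + λ(a)` with `λ(N • q)`, `λ(a)` integral, `λ(x) ≥ 0` and
`λ(u) < 1`, so `λ(N • q) ≤ λ(a)` and `x = u + (a - N • q)` with `a - N • q ∈ A`.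
-/

section Casts

variable {m : ℕ}

@[simp]
lemma ntq_apply (x : Fin m → ℕ) (j : Fin m) : ntq x j = x j := rfl

@[simp]
lemma ntz_apply (x : Fin m → ℕ) (j : Fin m) : ntz x j = x j := rfl

lemma ntq_injective : Function.Injective (ntq (m := m)) :=
  fun _ _ h => funext fun j => Nat.cast_injective (congrFun h j)

lemma ntz_injective : Function.Injective (ntz (m := m)) :=
  fun _ _ h => funext fun j => Nat.cast_injective (congrFun h j)

lemma ntq_add (x y : Fin m → ℕ) : ntq (x + y) = ntq x + ntq y := by
  ext; simp

lemma ntz_add (x y : Fin m → ℕ) : ntz (x + y) = ntz x + ntz y := by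
  ext; simp

lemma ntq_sub {x y : Fin m → ℕ} (h : y ≤ x) : ntq (x - y) = ntq x - ntq y := by
  ext j; simp [Nat.cast_sub (h j)]

lemma ntz_sub {x y : Fin m → ℕ} (h : y ≤ x) : ntz (x - y) = ntz x - ntz y := by
  ext j; simp [Nat.cast_sub (h j)]

lemma ntq_nsmul (n : ℕ) (x : Fin m → ℕ) : ntq (n • x) = (n : ℚ) • ntq x := by
  ext; simp

lemma ntq_sum_nsmul {d : ℕ} (k : Fin d → ℕ) (v : Fin d → Fin m → ℕ) :
    ntq (∑ i, k i • v i) = ∑ i, (k i : ℚ) • ntq (v i) := by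
  ext; simp [Finset.sum_apply]

end Casts

section AffineSemigroup

variable {m : ℕ} {S : AddSubmonoid (Fin m → ℕ)}

lemma ntq_mem_cone {x : Fin m → ℕ} (hx : x ∈ S) : ntq x ∈ cone S :=
  ⟨1, fun _ => 1, fun _ => x, fun _ => zero_le_one, fun _ => hx, by simp⟩

lemma nonneg_of_mem_cone {y : Fin m → ℚ} (hy : y ∈ cone S) : 0 ≤ y := by
  obtain ⟨n, c, v, hc, -, rfl⟩ := hy
  exact Finset.sum_nonneg fun i _ => smul_nonneg (hc i) fun j => Nat.cast_nonneg _

lemma le_of_ntq_sub_mem_cone {x y : Fin m → ℕ} (h : ntq x - ntq y ∈ cone S) : y ≤ x := by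
  intro j
  have hj := nonneg_of_mem_cone h j
  simp only [Pi.zero_apply, Pi.sub_apply, ntq_apply, sub_nonneg] at hj
  exact_mod_cast hj

lemma exists_sub_of_mem_grp {g : Fin m → ℤ} (hg : g ∈ grp S) :
    ∃ p ∈ S, ∃ q ∈ S, g = ntz p - ntz q := by
  induction hg using AddSubgroup.closure_induction with
  | mem _ hg =>
    obtain ⟨p, hp, rfl⟩ := hg
    exact ⟨p, hp, 0, S.zero_mem, by ext; simp⟩
  | zero => exact ⟨0, S.zero_mem, 0, S.zero_mem, by simp⟩
  | add _ _ _ _ ih ih' =>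
    obtain ⟨p, hp, q, hq, rfl⟩ := ih
    obtain ⟨p', hp', q', hq', rfl⟩ := ih'
    exact ⟨p + p', S.add_mem hp hp', q + q', S.add_mem hq hq', by
      rw [ntz_add, ntz_add]; abel⟩
  | neg _ _ ih =>
    obtain ⟨p, hp, q, hq, rfl⟩ := ih
    exact ⟨q, hq, p, hp, by abel⟩

lemma exists_add_mem_of_ntz_mem_grp {x : Fin m → ℕ} (hx : ntz x ∈ grp S) :
    ∃ q ∈ S, x + q ∈ S := by
  obtain ⟨p, hp, q, hq, hpq⟩ := exists_sub_of_mem_grp hx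
  have hxq : x + q = p := ntz_injective (by rw [ntz_add, hpq, sub_add_cancel])
  exact ⟨q, hq, hxq ▸ hp⟩

lemma exists_mem_BA_add (A B : AddSubmonoid (Fin m → ℕ)) {b : Fin m → ℕ} (hb : b ∈ B) :
    ∃ u ∈ BA A B, ∃ a ∈ A, b = u + a := by
  induction b using WellFoundedLT.induction with
  | _ b ih =>
    by_cases hbA : b ∈ BA A B
    · exact ⟨b, hbA, 0, A.zero_mem, (add_zero b).symm⟩
    obtain ⟨b', hb', a, ha, ha0, rfl⟩ : ∃ b' ∈ B, ∃ a ∈ A, a ≠ 0 ∧ b = b' + a :=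
      not_not.mp fun h => hbA ⟨hb, h⟩
    obtain ⟨u, hu, a', ha', rfl⟩ :=
      ih b' (lt_add_of_pos_right b' (pos_iff_ne_zero.mpr ha0)) hb'
    exact ⟨u, hu, a' + a, A.add_mem ha' ha, add_assoc u a' a⟩

end AffineSemigroup

lemma exists_pos_nat_mul_eq_nat {ι : Type*} [Fintype ι] {r : ι → ℚ} (hr : ∀ i, 0 ≤ r i) :
    ∃ N : ℕ, 0 < N ∧ ∃ n : ι → ℕ, ∀ i, (N : ℚ) * r i = n i := by
  have hden : ∀ i, ∃ k : ℕ, ∏ j, (r j).den = (r i).den * k :=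
    fun i => Finset.dvd_prod_of_mem (fun j => (r j).den) (Finset.mem_univ i)
  choose k hk using hden
  refine ⟨∏ j, (r j).den, Finset.prod_pos fun j _ => (r j).pos,
    fun i => k i * (r i).num.toNat, fun i => ?_⟩
  rw [hk i, Nat.cast_mul, mul_comm ((r i).den : ℚ), mul_assoc, Rat.den_mul_eq_num, Nat.cast_mul]
  exact_mod_cast congrArg _ (Int.toNat_of_nonneg (Rat.num_nonneg.mpr (hr i))).symm

section Coordinates

variable {m d : ℕ} {B : AddSubmonoid (Fin m → ℕ)} {e : Fin d → Fin m → ℕ}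

theorem coord_lt_one_of_normal (he : ∀ k, e k ∈ B)
    (hli : LinearIndependent ℚ fun k => ntq (e k))
    (hnormal : ∀ x : Fin m → ℕ, ntz x ∈ grp B → ntq x ∈ cone B → x ∈ B)
    {x : Fin m → ℕ} (hx : x ∈ BA (AddSubmonoid.closure (Set.range e)) B)
    {c : Fin d → ℚ} (hc : ∀ i, 0 ≤ c i) (hxc : ntq x = ∑ i, c i • ntq (e i)) (i : Fin d) :
    c i < 1 := by
  by_contra! hci
  set c' : Fin d → ℚ := c - Pi.single i 1
  have hc' : ∀ j, 0 ≤ c' j := by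
    intro j
    by_cases hj : j = i
    · subst hj; simpa [c'] using hci
    · simpa [c', hj] using hc j
  have hsub : ntq x - ntq (e i) = ∑ j, c' j • ntq (e j) := by
    simp [c', sub_smul, Finset.sum_sub_distrib, hxc, Pi.single_apply]
  have hcone : ntq x - ntq (e i) ∈ cone B := ⟨d, c', e, hc', he, hsub⟩
  have hle : e i ≤ x := le_of_ntq_sub_mem_cone hcone
  refine hx.2 ⟨x - e i, hnormal _ ?_ ?_, e i, AddSubmonoid.subset_closure ⟨i, rfl⟩,
    fun h => hli.ne_zero i (by ext; simp [h]), (tsub_add_cancel_of_le hle).symm⟩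
  · rw [ntz_sub hle]
    exact sub_mem (AddSubgroup.subset_closure ⟨x, hx.1, rfl⟩)
      (AddSubgroup.subset_closure ⟨e i, he i, rfl⟩)
  · rwa [ntq_sub hle]

variable {lam : (Fin m → ℕ) → Fin d → ℚ}
  (hlam : ∀ x : Fin m → ℕ, ntq x ∈ cone B →
    (∀ i, 0 ≤ lam x i) ∧ ntq x = ∑ i, lam x i • ntq (e i))
  (hbox : ∀ u ∈ BA (AddSubmonoid.closure (Set.range e)) B, ∀ i, lam u i < 1)
include hlam hbox

theorem mem_of_add_sum_nsmul_mem (he : ∀ k, e k ∈ B)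
    (hli : LinearIndependent ℚ fun k => ntq (e k)) {x : Fin m → ℕ} (hx : ntq x ∈ cone B)
    {n : Fin d → ℕ} (hxn : x + ∑ i, n i • e i ∈ B) : x ∈ B := by
  obtain ⟨u, hu, a, ha, hxu⟩ := exists_mem_BA_add (AddSubmonoid.closure (Set.range e)) B hxn
  obtain ⟨n', rfl⟩ := AddSubmonoid.mem_closure_range_iff_of_fintype.mp ha
  obtain ⟨hx0, hxlam⟩ := hlam x hx
  obtain ⟨-, hulam⟩ := hlam u (ntq_mem_cone hu.1)
  have hcoord : ∀ i, lam x i + n i = lam u i + n' i := by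
    apply Fintype.linearIndependent_iffₛ.mp hli
    simp only [add_smul, Finset.sum_add_distrib, ← hxlam, ← hulam, ← ntq_sum_nsmul, ← ntq_add, hxu]
  have hle : n ≤ n' := fun i => by
    have h : (n i : ℚ) < n' i + 1 := by linarith [hcoord i, hx0 i, hbox u hu i]
    exact Nat.lt_succ_iff.mp (by exact_mod_cast h)
  have hx_eq : x = u + ∑ i, (n' i - n i) • e i := by
    refine ntq_injective ?_
    rw [ntq_add, ntq_sum_nsmul, hxlam, hulam, ← Finset.sum_add_distrib]
    refine Finset.sum_congr rfl fun i _ => ?_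
    rw [← add_smul, Nat.cast_sub (hle i)]
    congr 1
    linarith [hcoord i]
  have hAB : AddSubmonoid.closure (Set.range e) ≤ B :=
    AddSubmonoid.closure_le.mpr (Set.range_subset_iff.mpr he)
  rw [hx_eq]
  exact B.add_mem hu.1 (hAB (AddSubmonoid.mem_closure_range_iff_of_fintype.mpr ⟨_, rfl⟩))

theorem mem_of_add_mem (he : ∀ k, e k ∈ B) (hli : LinearIndependent ℚ fun k => ntq (e k))
    {x q : Fin m → ℕ} (hx : ntq x ∈ cone B) (hq : q ∈ B) (hxq : x + q ∈ B) : x ∈ B := by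
  obtain ⟨hq0, hqlam⟩ := hlam q (ntq_mem_cone hq)
  obtain ⟨N, hN, n, hn⟩ := exists_pos_nat_mul_eq_nat hq0
  have hNq : N • q = ∑ i, n i • e i := by
    refine ntq_injective ?_
    rw [ntq_nsmul, ntq_sum_nsmul, hqlam, Finset.smul_sum]
    simp only [smul_smul, hn]
  have hxn : x + ∑ i, n i • e i ∈ B := by
    rw [← hNq, ← Nat.succ_pred_eq_of_pos hN, succ_nsmul', ← add_assoc]
    exact B.add_mem hxq (B.nsmul_mem hq _)
  exact mem_of_add_sum_nsmul_mem hlam hbox he hli hx hxn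

end Coordinates

theorem stmt14_general {m d : ℕ} (B : AddSubmonoid (Fin m → ℕ))
    (e : Fin d → Fin m → ℕ) (he : ∀ k, e k ∈ B)
    (hli : LinearIndependent ℚ (fun k => ntq (e k)))
    (A : AddSubmonoid (Fin m → ℕ)) (hA : A = AddSubmonoid.closure (Set.range e))
    (lam : (Fin m → ℕ) → Fin d → ℚ)
    (hlam : ∀ x : Fin m → ℕ, ntq x ∈ cone B →
      (∀ i, 0 ≤ lam x i) ∧ ntq x = ∑ i, lam x i • ntq (e i)) :
    (∀ x : Fin m → ℕ, ntz x ∈ grp B → ntq x ∈ cone B → x ∈ B) ↔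
      ∀ x ∈ BA A B, ∀ i, lam x i < 1 := by
  subst hA
  refine ⟨fun hnormal x hx => ?_, fun hbox x hgx hcx => ?_⟩
  · obtain ⟨hpos, hrep⟩ := hlam x (ntq_mem_cone hx.1)
    exact coord_lt_one_of_normal he hli hnormal hx hpos hrep
  · obtain ⟨q, hq, hxq⟩ := exists_add_mem_of_ntz_mem_grp hgx
    exact mem_of_add_mem hlam hbox he hli hcx hq hxq

/-- Let `B ⊆ ℕ^m` be a positive affine semigroup such that `C(B)` is
generated by linearly independent `e₁,…,e_d ∈ B`, and let `A` be the submonoid of `B`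
generated by the `e_k`.  For `x ∈ C(B)` write `x = Σ_i λ_i(x) e_i` with
`λ_i(x) ∈ ℚ≥0`.  Then `B` is normal, i.e. `B = G(B) ∩ C(B)`, if and only if every
`x ∈ B_A` satisfies `λ_i(x) < 1` for all `i`. -/
theorem stmt14 {m d : ℕ} (B : AddSubmonoid (Fin m → ℕ)) (hBfg : B.FG)
    (e : Fin d → Fin m → ℕ) (he : ∀ k, e k ∈ B)
    (hli : LinearIndependent ℚ (fun k => ntq (e k)))
    (A : AddSubmonoid (Fin m → ℕ)) (hA : A = AddSubmonoid.closure (Set.range e))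
    (hcone : cone B = cone A)
    (lam : (Fin m → ℕ) → Fin d → ℚ)
    (hlam : ∀ x : Fin m → ℕ, ntq x ∈ cone B →
      (∀ i, 0 ≤ lam x i) ∧ ntq x = ∑ i, lam x i • ntq (e i)) :
    (∀ x : Fin m → ℕ, ntz x ∈ grp B → ntq x ∈ cone B → x ∈ B) ↔
      ∀ x ∈ BA A B, ∀ i, lam x i < 1 :=
  stmt14_general B e he hli A hA lam hlam
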